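/- arXiv:1004.2648 — 2 statements merged into one kernel-verified Lean document; each statement's English description precedes it below -/
import Mathlib

section
/- For discrete random variables S, U, Ŝ on a finite Abelian group with U independent of (S, Ŝ), H(S+U | Ŝ) ≤ H(S − Ŝ + U), and hence I(S+U; S) − I(S+U; Ŝ) ≤ H(S − Ŝ + U) − H(U) = I(S − Ŝ; S − Ŝ + U). -/
open MeasureTheory ProbabilityTheory

/-- Shannon entropy of a discrete (finite-alphabet) random variable. -/
noncomputable def entH {Ω A : Type*} [MeasurableSpace Ω] [Fintype A]
    (μ : Measure Ω) (X : Ω → A) : ℝ :=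
  ∑ a : A, Real.negMulLog (μ (X ⁻¹' {a})).toReal

/-- Mutual information I(X;Y). -/
noncomputable def mutInfo {Ω A B : Type*} [MeasurableSpace Ω] [Fintype A] [Fintype B]
    (μ : Measure Ω) (X : Ω → A) (Y : Ω → B) : ℝ :=
  entH μ X + entH μ Y - entH μ (fun ω => (X ω, Y ω))

/-- Conditional entropy H(X|Y). -/
noncomputable def condEnt {Ω A B : Type*} [MeasurableSpace Ω] [Fintype A] [Fintype B]
    (μ : Measure Ω) (X : Ω → A) (Y : Ω → B) : ℝ :=
  entH μ (fun ω => (X ω, Y ω)) - entH μ Y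

/-- Conditional mutual information I(X;Y|Z). -/
noncomputable def condMutInfo {Ω A B C : Type*} [MeasurableSpace Ω] [Fintype A] [Fintype B]
    [Fintype C] (μ : Measure Ω) (X : Ω → A) (Y : Ω → B) (Z : Ω → C) : ℝ :=
  entH μ (fun ω => (X ω, Z ω)) + entH μ (fun ω => (Y ω, Z ω))
    - entH μ (fun ω => (X ω, (Y ω, Z ω))) - entH μ Z

section aux

variable {Ω A B : Type*} [MeasurableSpace Ω] [Fintype A] [Fintype B]
  (μ : Measure Ω) [IsProbabilityMeasure μ]

lemma pm_sum_one (X : Ω → A) (hX : ∀ a, MeasurableSet (X ⁻¹' {a})) :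
    ∑ a : A, (μ (X ⁻¹' {a})).toReal = 1 := by
  rw [← ENNReal.toReal_sum (fun a _ => measure_ne_top μ _),
    sum_measure_preimage_singleton Finset.univ (fun a _ => hX a)]
  simp

lemma pm_marg_left (X : Ω → A) (Y : Ω → B) (hY : ∀ b, MeasurableSet (Y ⁻¹' {b})) (a : A) :
    ∑ b : B, (μ ((fun ω => (X ω, Y ω)) ⁻¹' {(a, b)})).toReal = (μ (X ⁻¹' {a})).toReal := by
  have h : ∀ b, (fun ω => (X ω, Y ω)) ⁻¹' {(a, b)} = Y ⁻¹' {b} ∩ X ⁻¹' {a} := by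
    intro b; ext ω; simp [Prod.ext_iff, and_comm]
  rw [← ENNReal.toReal_sum (fun b _ => measure_ne_top μ _)]
  congr 1
  simp_rw [h, ← Measure.restrict_apply (hY _)]
  rw [sum_measure_preimage_singleton Finset.univ (fun b _ => hY b)]
  simp

lemma pm_marg_right (X : Ω → A) (Y : Ω → B) (hX : ∀ a, MeasurableSet (X ⁻¹' {a})) (b : B) :
    ∑ a : A, (μ ((fun ω => (X ω, Y ω)) ⁻¹' {(a, b)})).toReal = (μ (Y ⁻¹' {b})).toReal := by
  have h : ∀ a, (fun ω => (X ω, Y ω)) ⁻¹' {(a, b)} = X ⁻¹' {a} ∩ Y ⁻¹' {b} := by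
    intro a; ext ω; simp [Prod.ext_iff]
  rw [← ENNReal.toReal_sum (fun a _ => measure_ne_top μ _)]
  congr 1
  simp_rw [h, ← Measure.restrict_apply (hX _)]
  rw [sum_measure_preimage_singleton Finset.univ (fun a _ => hX a)]
  simp

lemma entH_comp_inj (X : Ω → A) {f : A → B} (hf : Function.Injective f) :
    entH μ (fun ω => f (X ω)) = entH μ X := by
  classical
  have key : ∀ a : A, (fun ω => f (X ω)) ⁻¹' {f a} = X ⁻¹' {a} := by
    intro a; ext ω; simp [hf.eq_iff]
  rw [entH, entH,
    ← Finset.sum_subset (Finset.subset_univ (Finset.univ.image f))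
      (fun b _ hb => ?_),
    Finset.sum_image (fun a _ a' _ h => hf h)]
  · exact Finset.sum_congr rfl fun a _ => by rw [key]
  · have : (fun ω => f (X ω)) ⁻¹' {b} = ∅ := by
      ext ω
      simp only [Set.mem_preimage, Set.mem_singleton_iff, Set.mem_empty_iff_false, iff_false]
      intro h; exact hb (Finset.mem_image.2 ⟨X ω, Finset.mem_univ _, h⟩)
    simp [this]

lemma entH_indep {mA : MeasurableSpace A} {mB : MeasurableSpace B}
    [MeasurableSingletonClass A] [MeasurableSingletonClass B]
    {X : Ω → A} {Y : Ω → B} (hX : Measurable X) (hY : Measurable Y)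
    (h : IndepFun X Y μ) :
    entH μ (fun ω => (X ω, Y ω)) = entH μ X + entH μ Y := by
  have hprod : ∀ a b, (μ ((fun ω => (X ω, Y ω)) ⁻¹' {(a, b)})).toReal
      = (μ (X ⁻¹' {a})).toReal * (μ (Y ⁻¹' {b})).toReal := by
    intro a b
    have hEq : (fun ω => (X ω, Y ω)) ⁻¹' {(a, b)} = X ⁻¹' {a} ∩ Y ⁻¹' {b} := by
      ext ω; simp [Prod.ext_iff]
    rw [hEq, h.measure_inter_preimage_eq_mul _ _ (measurableSet_singleton a)
      (measurableSet_singleton b), ENNReal.toReal_mul]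
  have hp := pm_sum_one μ X (fun a => hX (measurableSet_singleton a))
  have hq := pm_sum_one μ Y (fun b => hY (measurableSet_singleton b))
  rw [entH, entH, entH, Fintype.sum_prod_type]
  simp_rw [hprod]
  simp_rw [Real.negMulLog_mul]
  simp_rw [Finset.sum_add_distrib]
  simp_rw [← Finset.sum_mul]
  simp_rw [← Finset.mul_sum]
  rw [hq, one_mul, ← Finset.sum_mul, hp, one_mul]

/-- Subadditivity of entropy: `H(X, Y) ≤ H(X) + H(Y)`. -/
lemma entH_pair_le (X : Ω → A) (Y : Ω → B)
    (hX : ∀ a, MeasurableSet (X ⁻¹' {a})) (hY : ∀ b, MeasurableSet (Y ⁻¹' {b})) :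
    entH μ (fun ω => (X ω, Y ω)) ≤ entH μ X + entH μ Y := by
  set p : A → ℝ := fun a => (μ (X ⁻¹' {a})).toReal with hpdef
  set q : B → ℝ := fun b => (μ (Y ⁻¹' {b})).toReal with hqdef
  set r : A → B → ℝ := fun a b => (μ ((fun ω => (X ω, Y ω)) ⁻¹' {(a, b)})).toReal with hrdef
  have hr_nonneg : ∀ a b, 0 ≤ r a b := fun a b => ENNReal.toReal_nonneg
  have hpq_nonneg : ∀ a b, (0:ℝ) ≤ p a * q b :=
    fun a b => mul_nonneg ENNReal.toReal_nonneg ENNReal.toReal_nonneg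
  have hrp : ∀ a b, r a b ≤ p a := by
    intro a b
    refine ENNReal.toReal_mono (measure_ne_top μ _) (measure_mono ?_)
    intro ω hω
    simp only [Set.mem_preimage, Set.mem_singleton_iff] at hω ⊢
    rw [Prod.ext_iff] at hω; exact hω.1
  have hrq : ∀ a b, r a b ≤ q b := by
    intro a b
    refine ENNReal.toReal_mono (measure_ne_top μ _) (measure_mono ?_)
    intro ω hω
    simp only [Set.mem_preimage, Set.mem_singleton_iff] at hω ⊢
    rw [Prod.ext_iff] at hω; exact hω.2
  have hmargL : ∀ a, ∑ b : B, r a b = p a := fun a => pm_marg_left μ X Y hY a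
  have hmargR : ∀ b, ∑ a : A, r a b = q b := fun b => pm_marg_right μ X Y hX b
  have hpsum : ∑ a : A, p a = 1 := pm_sum_one μ X hX
  have hqsum : ∑ b : B, q b = 1 := pm_sum_one μ Y hY
  -- pointwise Gibbs inequality
  have key : ∀ a b, r a b * (Real.log (p a) + Real.log (q b))
      ≤ r a b * Real.log (r a b) + (p a * q b - r a b) := by
    intro a b
    rcases eq_or_lt_of_le (hr_nonneg a b) with h0 | hpos
    · rw [← h0]; simpa using hpq_nonneg a b
    · have hpa : 0 < p a := lt_of_lt_of_le hpos (hrp a b)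
      have hqb : 0 < q b := lt_of_lt_of_le hpos (hrq a b)
      have hpq : 0 < p a * q b := mul_pos hpa hqb
      have hlog : Real.log (p a * q b / r a b) ≤ p a * q b / r a b - 1 :=
        Real.log_le_sub_one_of_pos (div_pos hpq hpos)
      rw [Real.log_div (ne_of_gt hpq) (ne_of_gt hpos), Real.log_mul (ne_of_gt hpa)
        (ne_of_gt hqb)] at hlog
      have h2 := mul_le_mul_of_nonneg_left hlog (le_of_lt hpos)
      have hc : r a b * (p a * q b / r a b) = p a * q b := by
        field_simp
      rw [mul_sub, mul_sub, mul_one, hc] at h2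
      linarith
  -- sum up
  have hsum : ∑ a : A, ∑ b : B, r a b * (Real.log (p a) + Real.log (q b))
      ≤ ∑ a : A, ∑ b : B, r a b * Real.log (r a b) := by
    have hpq_sum : ∑ a : A, ∑ b : B, p a * q b = (∑ a : A, p a) * (∑ b : B, q b) := by
      rw [Finset.sum_mul]
      exact Finset.sum_congr rfl fun a _ => by rw [Finset.mul_sum]
    have h1 : ∑ a : A, ∑ b : B, (r a b * Real.log (r a b) + (p a * q b - r a b))
        = ∑ a : A, ∑ b : B, r a b * Real.log (r a b)
          + ((∑ a : A, p a) * (∑ b : B, q b) - ∑ a : A, ∑ b : B, r a b) := by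
      simp_rw [Finset.sum_add_distrib, Finset.sum_sub_distrib]
      rw [hpq_sum]
    have h2 : ∑ a : A, ∑ b : B, r a b = 1 := by
      simp_rw [hmargL]; exact hpsum
    calc ∑ a : A, ∑ b : B, r a b * (Real.log (p a) + Real.log (q b))
        ≤ ∑ a : A, ∑ b : B, (r a b * Real.log (r a b) + (p a * q b - r a b)) :=
          Finset.sum_le_sum fun a _ => Finset.sum_le_sum fun b _ => key a b
      _ = _ := by rw [h1, hpsum, hqsum, h2]; ring
  -- identify the sums with entropies
  have hL : ∑ a : A, ∑ b : B, r a b * (Real.log (p a) + Real.log (q b))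
      = ∑ a : A, p a * Real.log (p a) + ∑ b : B, q b * Real.log (q b) := by
    simp_rw [mul_add, Finset.sum_add_distrib]
    congr 1
    · refine Finset.sum_congr rfl fun a _ => ?_
      rw [← Finset.sum_mul, hmargL]
    · rw [Finset.sum_comm]
      refine Finset.sum_congr rfl fun b _ => ?_
      rw [← Finset.sum_mul, hmargR]
  have hR : ∑ a : A, ∑ b : B, r a b * Real.log (r a b)
      = - entH μ (fun ω => (X ω, Y ω)) := by
    rw [entH, Fintype.sum_prod_type, ← Finset.sum_neg_distrib]
    refine Finset.sum_congr rfl fun a _ => ?_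
    rw [← Finset.sum_neg_distrib]
    exact Finset.sum_congr rfl fun b _ => by rw [Real.negMulLog, neg_mul, neg_neg]
  have hEX : entH μ X = - ∑ a : A, p a * Real.log (p a) := by
    rw [entH, ← Finset.sum_neg_distrib]
    exact Finset.sum_congr rfl fun a _ => by rw [Real.negMulLog, neg_mul]
  have hEY : entH μ Y = - ∑ b : B, q b * Real.log (q b) := by
    rw [entH, ← Finset.sum_neg_distrib]
    exact Finset.sum_congr rfl fun b _ => by rw [Real.negMulLog, neg_mul]
  rw [hL, hR] at hsum
  rw [hEX, hEY]
  linarith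

end aux

/-- With U independent of (S, Ŝ): H(S+U | Ŝ) ≤ H(S − Ŝ + U), hence
I(S+U; S) − I(S+U; Ŝ) ≤ H(S − Ŝ + U) − H(U) = I(S − Ŝ; S − Ŝ + U). -/
theorem stmt2 {Ω G : Type*} [MeasurableSpace Ω] [MeasurableSpace G]
    [MeasurableSingletonClass G] [Fintype G] [AddCommGroup G]
    (μ : Measure Ω) [IsProbabilityMeasure μ]
    (S U Shat : Ω → G) (hS : Measurable S) (hU : Measurable U) (hShat : Measurable Shat)
    (hindep : IndepFun U (fun ω => (S ω, Shat ω)) μ) :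
    condEnt μ (fun ω => S ω + U ω) Shat ≤ entH μ (fun ω => S ω - Shat ω + U ω) ∧
    mutInfo μ (fun ω => S ω + U ω) S - mutInfo μ (fun ω => S ω + U ω) Shat
      ≤ entH μ (fun ω => S ω - Shat ω + U ω) - entH μ U ∧
    entH μ (fun ω => S ω - Shat ω + U ω) - entH μ U
      = mutInfo μ (fun ω => S ω - Shat ω) (fun ω => S ω - Shat ω + U ω) := by
  -- Measurability facts
  have hSShat : Measurable fun ω => (S ω, Shat ω) := hS.prodMk hShat
  have hD : Measurable fun ω => S ω - Shat ω :=
    (measurable_of_countable (fun p : G × G => p.1 - p.2)).comp hSShat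
  have hV : Measurable fun ω => S ω - Shat ω + U ω :=
    (measurable_of_countable (fun p : G × G => p.1 + p.2)).comp (hD.prodMk hU)
  have fib : ∀ {T : Ω → G}, Measurable T → ∀ g : G, MeasurableSet (T ⁻¹' {g}) :=
    fun hT g => hT (measurableSet_singleton g)
  -- Independences
  have hUS : IndepFun U S μ := by
    have := hindep.comp measurable_id (measurable_fst : Measurable (Prod.fst : G × G → G))
    exact this
  have hUD : IndepFun U (fun ω => S ω - Shat ω) μ := by
    have := hindep.comp measurable_id
      (measurable_of_countable (fun p : G × G => p.1 - p.2))
    exact this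
  -- Entropy identities via injections
  have e1 : entH μ (fun ω => (S ω + U ω, Shat ω))
      = entH μ (fun ω => (S ω - Shat ω + U ω, Shat ω)) := by
    have hfinj : Function.Injective (fun p : G × G => (p.1 + p.2, p.2)) := by
      intro pp qq h
      simp only [Prod.mk.injEq] at h
      obtain ⟨h1, h2⟩ := h
      rw [h2] at h1
      exact Prod.ext (add_right_cancel h1) h2
    have := entH_comp_inj μ (fun ω => (S ω - Shat ω + U ω, Shat ω)) hfinj
    rw [← this]
    congr 1
    funext ω
    exact Prod.ext (by dsimp only; abel) rfl
  have e2 : entH μ (fun ω => (S ω + U ω, S ω)) = entH μ U + entH μ S := by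
    have hfinj : Function.Injective (fun p : G × G => (p.2 + p.1, p.2)) := by
      intro pp qq h
      simp only [Prod.mk.injEq] at h
      obtain ⟨h1, h2⟩ := h
      rw [h2] at h1
      exact Prod.ext (add_left_cancel h1) h2
    have heq := entH_comp_inj μ (fun ω => (U ω, S ω)) hfinj
    have : (fun ω => (S ω + U ω, S ω))
        = fun ω => ((fun p : G × G => (p.2 + p.1, p.2)) ((U ω, S ω))) := by
      funext ω; exact Prod.ext (by abel) rfl
    rw [this, heq, entH_indep μ hU hS hUS]
  have e3 : entH μ (fun ω => (S ω - Shat ω, S ω - Shat ω + U ω))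
      = entH μ U + entH μ (fun ω => S ω - Shat ω) := by
    have hfinj : Function.Injective (fun p : G × G => (p.2, p.2 + p.1)) := by
      intro pp qq h
      simp only [Prod.mk.injEq] at h
      obtain ⟨h2, h1⟩ := h
      rw [h2] at h1
      exact Prod.ext (add_left_cancel h1) h2
    have heq := entH_comp_inj μ (fun ω => (U ω, S ω - Shat ω)) hfinj
    have : (fun ω => (S ω - Shat ω, S ω - Shat ω + U ω))
        = fun ω => ((fun p : G × G => (p.2, p.2 + p.1)) ((U ω, S ω - Shat ω))) := by
      funext ω; rfl
    rw [this, heq, entH_indep μ hU hD hUD]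
  -- Part 1
  have part1 : condEnt μ (fun ω => S ω + U ω) Shat ≤ entH μ (fun ω => S ω - Shat ω + U ω) := by
    rw [condEnt, e1]
    have := entH_pair_le μ (fun ω => S ω - Shat ω + U ω) Shat (fib hV) (fib hShat)
    linarith
  refine ⟨part1, ?_, ?_⟩
  · -- Part 2
    rw [mutInfo, mutInfo, e2]
    rw [condEnt, e1] at part1
    have := entH_pair_le μ (fun ω => S ω - Shat ω + U ω) Shat (fib hV) (fib hShat)
    linarith
  · -- Part 3
    rw [mutInfo, e3]
    ring
end

section
/- Single-letterization of the additive rate-loss bound: if X₁,…,X_m and U₁,…,U_m are sequences of discrete random variables on a finite Abelian group with (U₁,…,U_m) i.i.d. and independent of (X₁,…,X_m), then H(X^m + U^m) − H(U^m) ≤ Σ_{j=1}^m [H(X_j + U_j) − H(U_j)], where addition is componentwise. -/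
open MeasureTheory ProbabilityTheory

open MeasureTheory ProbabilityTheory Finset

section RealLemmas

/-- negMulLog of a finite product. -/
lemma negMulLog_prod' {ι : Type*} [DecidableEq ι] (s : Finset ι) (f : ι → ℝ) :
    Real.negMulLog (∏ i ∈ s, f i)
      = ∑ i ∈ s, (∏ k ∈ s.erase i, f k) * Real.negMulLog (f i) := by
  induction s using Finset.induction_on with
  | empty => simp
  | @insert a t ha ih =>
    rw [Finset.prod_insert ha, Real.negMulLog_mul, Finset.sum_insert ha,
      Finset.erase_insert ha, ih, Finset.mul_sum]
    congr 1
    refine Finset.sum_congr rfl fun i hi => ?_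
    have hia : i ≠ a := fun h => ha (h ▸ hi)
    rw [Finset.erase_insert_of_ne hia.symm,
      Finset.prod_insert (fun h => ha (Finset.mem_of_mem_erase h))]
    ring

/-- Entropy of a product pmf is the sum of entropies. -/
lemma sum_negMulLog_prod {m : ℕ} {G : Type*} [Fintype G] (q : Fin m → G → ℝ)
    (h1 : ∀ j, ∑ a, q j a = 1) :
    ∑ u : Fin m → G, Real.negMulLog (∏ j, q j (u j))
      = ∑ j, ∑ a, Real.negMulLog (q j a) := by
  classical
  have step1 : ∀ u : Fin m → G, Real.negMulLog (∏ j, q j (u j))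
      = ∑ j, (∏ k ∈ Finset.univ.erase j, q k (u k)) * Real.negMulLog (q j (u j)) :=
    fun u => negMulLog_prod' _ _
  simp only [step1]
  rw [Finset.sum_comm]
  refine Finset.sum_congr rfl fun j _ => ?_
  have key : ∀ u : Fin m → G,
      (∏ k ∈ Finset.univ.erase j, q k (u k)) * Real.negMulLog (q j (u j))
        = ∏ k, (fun k x => if k = j then Real.negMulLog (q j x) else q k x) k (u k) := by
    intro u
    rw [← Finset.mul_prod_erase Finset.univ _ (Finset.mem_univ j)]
    simp only [if_pos rfl]
    rw [mul_comm]
    congr 1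
    exact Finset.prod_congr rfl fun k hk => by
      simp [if_neg (Finset.ne_of_mem_erase hk)]
  simp only [key]
  rw [← Fintype.prod_sum (fun k (x : G) => if k = j then Real.negMulLog (q j x) else q k x)]
  rw [← Finset.mul_prod_erase Finset.univ _ (Finset.mem_univ j)]
  simp only [if_pos rfl]
  have : ∀ k ∈ Finset.univ.erase j,
      (∑ x, if k = j then Real.negMulLog (q j x) else q k x) = 1 := by
    intro k hk
    simp only [if_neg (Finset.ne_of_mem_erase hk)]
    exact h1 k
  rw [Finset.prod_congr rfl this]
  simp

/-- Rewriting the sum of marginal entropies as a cross term. -/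
lemma sum_marginal_entropy {m : ℕ} {G : Type*} [Fintype G] [DecidableEq G]
    (p : (Fin m → G) → ℝ) (hp : ∀ u, 0 ≤ p u)
    (q : Fin m → G → ℝ)
    (hq : ∀ j a, q j a = ∑ u ∈ Finset.univ.filter (fun u => u j = a), p u) :
    ∑ j, ∑ a, Real.negMulLog (q j a)
      = -∑ u, p u * Real.log (∏ j, q j (u j)) := by
  have key : ∀ j, ∑ a, Real.negMulLog (q j a)
      = ∑ u, p u * (-Real.log (q j (u j))) := by
    intro j
    rw [← Finset.sum_fiberwise Finset.univ (fun u => u j)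
      (fun u => p u * (-Real.log (q j (u j))))]
    refine Finset.sum_congr rfl fun a _ => ?_
    have : ∀ u ∈ Finset.univ.filter (fun u => u j = a),
        p u * (-Real.log (q j (u j))) = p u * (-Real.log (q j a)) := by
      intro u hu
      rw [(Finset.mem_filter.1 hu).2]
    rw [Finset.sum_congr rfl this, ← Finset.sum_mul, ← hq j a]
    rw [Real.negMulLog]
    ring
  simp only [key]
  rw [Finset.sum_comm, ← Finset.sum_neg_distrib]
  refine Finset.sum_congr rfl fun u _ => ?_
  rcases eq_or_lt_of_le (hp u) with h0 | h0
  · simp [← h0]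
  · have hqpos : ∀ j, q j (u j) ≠ 0 := by
      intro j
      have : p u ≤ q j (u j) := by
        rw [hq j (u j)]
        exact Finset.single_le_sum (fun i _ => hp i)
          (Finset.mem_filter.2 ⟨Finset.mem_univ u, rfl⟩)
      exact ne_of_gt (lt_of_lt_of_le h0 this)
    rw [Real.log_prod (fun j _ => hqpos j), Finset.mul_sum, ← Finset.sum_neg_distrib]
    exact Finset.sum_congr rfl fun j _ => by ring

/-- Gibbs' inequality. -/
lemma gibbs {A : Type*} [Fintype A] (p P : A → ℝ) (hp : ∀ u, 0 ≤ p u) (hP : ∀ u, 0 ≤ P u)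
    (hsp : ∑ u, p u = 1) (hsP : ∑ u, P u = 1) (hpos : ∀ u, 0 < p u → 0 < P u) :
    ∑ u, Real.negMulLog (p u) ≤ -∑ u, p u * Real.log (P u) := by
  have key : ∀ u, Real.negMulLog (p u) + p u * Real.log (P u) ≤ P u - p u := by
    intro u
    rcases eq_or_lt_of_le (hp u) with h0 | h0
    · simp [← h0, hP u]
    · have hPu := hpos u h0
      have hlog : Real.log (P u / p u) ≤ P u / p u - 1 :=
        Real.log_le_sub_one_of_pos (by positivity)
      have hdiv : Real.log (P u / p u) = Real.log (P u) - Real.log (p u) :=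
        Real.log_div (ne_of_gt hPu) (ne_of_gt h0)
      have := mul_le_mul_of_nonneg_left hlog (le_of_lt h0)
      rw [hdiv] at this
      have hne : p u ≠ 0 := ne_of_gt h0
      rw [Real.negMulLog]
      field_simp at this ⊢
      nlinarith [this]
  have hsum := Finset.sum_le_sum (fun u (_ : u ∈ Finset.univ) => key u)
  rw [Finset.sum_sub_distrib, hsp, hsP, Finset.sum_add_distrib] at hsum
  linarith
end RealLemmas
section MeasureLemmas

open MeasureTheory ProbabilityTheory

variable {Ω G : Type*} [MeasurableSpace Ω] [MeasurableSpace G] [MeasurableSingletonClass G]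
  [Fintype G] {m : ℕ}

lemma sum_toReal_preimage_one (μ : Measure Ω) [IsProbabilityMeasure μ] {A : Type*} [Fintype A]
    [MeasurableSpace A] [MeasurableSingletonClass A] {f : Ω → A} (hf : Measurable f) :
    ∑ a : A, (μ (f ⁻¹' {a})).toReal = 1 := by
  have h := sum_measure_preimage_singleton (μ := μ) (Finset.univ : Finset A)
    (fun a _ => hf (measurableSet_singleton a))
  rw [Finset.coe_univ, Set.preimage_univ, measure_univ] at h
  calc ∑ a : A, (μ (f ⁻¹' {a})).toReal = (∑ a : A, μ (f ⁻¹' {a})).toReal :=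
        (ENNReal.toReal_sum fun a _ => measure_ne_top μ _).symm
    _ = 1 := by rw [h, ENNReal.toReal_one]

lemma marginal_toReal [DecidableEq G] (μ : Measure Ω) [IsProbabilityMeasure μ]
    {Z : Fin m → Ω → G} (hZ : ∀ j, Measurable (Z j)) (j : Fin m) (a : G) :
    (μ (Z j ⁻¹' {a})).toReal
      = ∑ u ∈ Finset.univ.filter (fun u : Fin m → G => u j = a),
          (μ ((fun ω k => Z k ω) ⁻¹' {u})).toReal := by
  have hjoint : Measurable (fun ω (k : Fin m) => Z k ω) := measurable_pi_lambda _ hZ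
  have hset : Z j ⁻¹' {a}
      = (fun ω (k : Fin m) => Z k ω) ⁻¹'
          ↑(Finset.univ.filter (fun u : Fin m → G => u j = a)) := by
    ext ω
    simp [Finset.mem_filter]
  rw [hset, ← sum_measure_preimage_singleton _ (fun u _ => hjoint (measurableSet_singleton u)),
    ENNReal.toReal_sum (fun u _ => measure_ne_top μ _)]

lemma entH_pi_le (μ : Measure Ω) [IsProbabilityMeasure μ] (Z : Fin m → Ω → G)
    (hZ : ∀ j, Measurable (Z j)) :
    entH μ (fun ω => fun j => Z j ω) ≤ ∑ j, entH μ (Z j) := by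
  classical
  set p : (Fin m → G) → ℝ := fun u => (μ ((fun ω j => Z j ω) ⁻¹' {u})).toReal with hp_def
  set q : Fin m → G → ℝ := fun j a => (μ (Z j ⁻¹' {a})).toReal with hq_def
  have hjoint : Measurable (fun ω (j : Fin m) => Z j ω) := measurable_pi_lambda _ hZ
  have hp : ∀ u, 0 ≤ p u := fun u => ENNReal.toReal_nonneg
  have hq : ∀ j a, q j a = ∑ u ∈ Finset.univ.filter (fun u : Fin m → G => u j = a), p u :=
    fun j a => marginal_toReal μ hZ j a
  have hsp : ∑ u, p u = 1 := sum_toReal_preimage_one μ hjoint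
  have hsq : ∀ j, ∑ a, q j a = 1 := fun j => sum_toReal_preimage_one μ (hZ j)
  have hsP : ∑ u : Fin m → G, ∏ j, q j (u j) = 1 := by
    rw [← Fintype.prod_sum q]
    exact Finset.prod_eq_one fun j _ => hsq j
  have hpos : ∀ u, 0 < p u → 0 < ∏ j, q j (u j) := by
    intro u hu
    refine Finset.prod_pos fun j _ => lt_of_lt_of_le hu ?_
    rw [hq]
    exact Finset.single_le_sum (fun i _ => hp i)
      (Finset.mem_filter.2 ⟨Finset.mem_univ u, rfl⟩)
  have hPnn : ∀ u : Fin m → G, 0 ≤ ∏ j, q j (u j) :=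
    fun u => Finset.prod_nonneg fun j _ => ENNReal.toReal_nonneg
  have hbound := gibbs p (fun u => ∏ j, q j (u j)) hp hPnn hsp hsP hpos
  have hmarg := sum_marginal_entropy p hp q hq
  calc entH μ (fun ω => fun j => Z j ω) = ∑ u, Real.negMulLog (p u) := rfl
    _ ≤ -∑ u, p u * Real.log (∏ j, q j (u j)) := hbound
    _ = ∑ j, ∑ a, Real.negMulLog (q j a) := hmarg.symm
    _ = ∑ j, entH μ (Z j) := rfl

lemma entH_pi_eq (μ : Measure Ω) [IsProbabilityMeasure μ] (Z : Fin m → Ω → G)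
    (hZ : ∀ j, Measurable (Z j))
    (hindep : iIndepFun Z μ) :
    entH μ (fun ω => fun j => Z j ω) = ∑ j, entH μ (Z j) := by
  classical
  have hprod : ∀ u : Fin m → G,
      (μ ((fun ω (j : Fin m) => Z j ω) ⁻¹' {u})).toReal
        = ∏ j, (μ (Z j ⁻¹' {u j})).toReal := by
    intro u
    have hset : (fun ω (j : Fin m) => Z j ω) ⁻¹' {u} = ⋂ j, Z j ⁻¹' {u j} := by
      ext ω
      simp [funext_iff]
    rw [hset, hindep.meas_iInter (fun j => ⟨{u j}, measurableSet_singleton _, rfl⟩),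
      ENNReal.toReal_prod]
  have h1 : entH μ (fun ω => fun j => Z j ω)
      = ∑ u : Fin m → G, Real.negMulLog (∏ j, (μ (Z j ⁻¹' {u j})).toReal) := by
    unfold entH
    exact Finset.sum_congr rfl fun u _ => by rw [hprod u]
  rw [h1, sum_negMulLog_prod _ (fun j => sum_toReal_preimage_one μ (hZ j))]
  rfl

end MeasureLemmas

/-- Single-letterization of the additive rate-loss bound: if U^m is i.i.d. and
independent of X^m (componentwise group addition), then
H(X^m + U^m) − H(U^m) ≤ Σ_j [H(X_j + U_j) − H(U_j)]. -/
theorem stmt9 {Ω G : Type*} [MeasurableSpace Ω] [MeasurableSpace G]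
    [MeasurableSingletonClass G] [Fintype G] [AddCommGroup G]
    (μ : Measure Ω) [IsProbabilityMeasure μ] (m : ℕ)
    (X U : Fin m → Ω → G)
    (hXmeas : ∀ j, Measurable (X j)) (hUmeas : ∀ j, Measurable (U j))
    (hUindep : iIndepFun U μ)
    (hUid : ∀ i j, Measure.map (U i) μ = Measure.map (U j) μ)
    (hXU : IndepFun (fun ω => fun j => U j ω) (fun ω => fun j => X j ω) μ) :
    entH μ (fun ω => fun j => X j ω + U j ω) - entH μ (fun ω => fun j => U j ω)
      ≤ ∑ j, (entH μ (fun ω => X j ω + U j ω) - entH μ (U j)) := by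
  have hYmeas : ∀ j, Measurable (fun ω => X j ω + U j ω) := by
    intro j
    apply measurable_to_countable'
    intro a
    have hset : (fun ω => X j ω + U j ω) ⁻¹' {a}
        = ⋃ g : G, (X j ⁻¹' {g} ∩ U j ⁻¹' {a - g}) := by
      ext ω
      simp only [Set.mem_preimage, Set.mem_singleton_iff, Set.mem_iUnion, Set.mem_inter_iff]
      constructor
      · intro h
        exact ⟨X j ω, rfl, by rw [← h]; abel⟩
      · rintro ⟨g, hg, hu⟩
        rw [hg, hu]
        abel
    rw [hset]
    exact MeasurableSet.iUnion fun g =>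
      (hXmeas j (measurableSet_singleton g)).inter (hUmeas j (measurableSet_singleton (a - g)))
  have h1 : entH μ (fun ω => fun j => X j ω + U j ω)
      ≤ ∑ j, entH μ (fun ω => X j ω + U j ω) :=
    entH_pi_le μ (fun j ω => X j ω + U j ω) hYmeas
  have h2 : entH μ (fun ω => fun j => U j ω) = ∑ j, entH μ (U j) :=
    entH_pi_eq μ U hUmeas hUindep
  rw [Finset.sum_sub_distrib]
  linarith
end
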